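/- arXiv:1009.2120 — 2 statements merged into one kernel-verified Lean document; each statement's English description precedes it below -/
import Mathlib

section
/- For adjacent simple reflections s_i, s_{i+1} of S_{n+1} acting on the polynomial ring R, the Demazure operators satisfy the braid relation ∂_i ∂_{i+1} ∂_i = ∂_{i+1} ∂_i ∂_{i+1}. -/
open MvPolynomial

noncomputable section

/-- The action of the simple transposition `s_i = (i, i+1)` of `S_{n+1}` on the
coordinate ring `k[x_0, …, x_n]` (permutation model of the reflection representation),
permuting the variables. -/
def sAct {k : Type*} [CommRing k] {n : ℕ} (i : Fin n) :
    MvPolynomial (Fin (n + 1)) k →ₐ[k] MvPolynomial (Fin (n + 1)) k :=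
  rename (Equiv.swap i.castSucc i.succ)

/-- The `i`-th simple root `f_i = x_i - x_{i+1}`. -/
def sroot (k : Type*) [CommRing k] {n : ℕ} (i : Fin n) : MvPolynomial (Fin (n + 1)) k :=
  X i.castSucc - X i.succ

/-!
Work over a domain `R` with involutions `s`, `t` satisfying the braid relation and roots
`a`, `b` with `s a = -a`, `t b = -b`, `s b = t a = a + b`; the divided differences are then
characterised by `a * ∂_s P = P - s P` and `b * ∂_t P = P - t P`. Expanding, the product
`a b (a + b) ∂_s ∂_t ∂_s P` is the alternating sum of `w P` over the six words
`w ∈ {1, s, t, ts, st, sts}`, and the braid relation `sts = tst` makes this sum symmetric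
in `s` and `t`. Cancelling the nonzero factor `a b (a + b)` gives the braid relation for
the divided differences.
-/

section DividedDifference

variable {R : Type*} [CommRing R] [IsDomain R]

lemma divided_difference_invariant (s : R →+* R) (hs : Function.Involutive s) {a : R}
    (ha : a ≠ 0) (hsa : s a = -a) {D : R → R} (hD : ∀ P, a * D P = P - s P) (P : R) :
    s (D P) = D P := by
  have h := congrArg s (hD P)
  rw [map_mul, map_sub, hsa, hs] at h
  exact mul_left_cancel₀ ha (by linear_combination -h - hD P)

lemma roots_mul_divided_difference_triple (s t : R →+* R) (hs : Function.Involutive s)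
    {a b : R} (ha : a ≠ 0) (hsa : s a = -a) (hsb : s b = a + b) (hta : t a = a + b)
    {Ds Dt : R → R} (hDs : ∀ P, a * Ds P = P - s P) (hDt : ∀ P, b * Dt P = P - t P)
    (P : R) :
    a * b * (a + b) * Ds (Dt (Ds P)) =
      P - s P - t P + t (s P) + s (t P) - s (t (s P)) := by
  have hsDs : s (Ds P) = Ds P := divided_difference_invariant s hs ha hsa hDs P
  have ht_root : (a + b) * t (Ds P) = t P - t (s P) := by
    rw [← hta, ← map_mul, hDs, map_sub]
  have hDtDs : b * (a + b) * Dt (Ds P) = (a + b) * Ds P - (t P - t (s P)) := by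
    linear_combination (a + b) * hDt (Ds P) - ht_root
  have hs_DtDs : (a + b) * b * s (Dt (Ds P)) = b * Ds P - (s (t P) - s (t (s P))) := by
    have h := congrArg s hDtDs
    simp only [map_mul, map_sub, map_add, hsa, hsb, hsDs] at h
    linear_combination h
  linear_combination b * (a + b) * hDs (Dt (Ds P)) + hDtDs - hs_DtDs + hDs P

theorem divided_difference_braid (s t : R →+* R) (hs : Function.Involutive s)
    (ht : Function.Involutive t) (hst : ∀ P, s (t (s P)) = t (s (t P))) {a b : R}
    (ha : a ≠ 0) (hb : b ≠ 0) (hab : a + b ≠ 0) (hsa : s a = -a) (htb : t b = -b)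
    (hsb : s b = a + b) (hta : t a = a + b)
    {Ds Dt : R → R} (hDs : ∀ P, a * Ds P = P - s P) (hDt : ∀ P, b * Dt P = P - t P)
    (P : R) :
    Ds (Dt (Ds P)) = Dt (Ds (Dt P)) := by
  have hst_expand := roots_mul_divided_difference_triple s t hs ha hsa hsb hta hDs hDt P
  have hts_expand := roots_mul_divided_difference_triple t s ht hb htb
    (by rw [hta, add_comm]) (by rw [hsb, add_comm]) hDt hDs P
  refine mul_left_cancel₀ (mul_ne_zero (mul_ne_zero ha hb) hab) ?_
  linear_combination hst_expand - hts_expand - hst P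

end DividedDifference

section SwapVariables

variable {σ k : Type*} [DecidableEq σ] [CommRing k]

lemma rename_swap_involutive (u v : σ) :
    Function.Involutive (rename (R := k) (Equiv.swap u v)) := fun P => by
  rw [rename_rename, ← Equiv.Perm.coe_mul, Equiv.swap_mul_self, Equiv.Perm.coe_one,
    rename_id_apply]

lemma rename_swap_braid {u v w : σ} (huv : u ≠ v) (hvw : v ≠ w) (huw : u ≠ w)
    (P : MvPolynomial σ k) :
    rename (Equiv.swap u v) (rename (Equiv.swap v w) (rename (Equiv.swap u v) P)) =
      rename (Equiv.swap v w) (rename (Equiv.swap u v) (rename (Equiv.swap v w) P)) := by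
  have h_sts : Equiv.swap u v * Equiv.swap v w * Equiv.swap u v = Equiv.swap u w := by
    rw [Equiv.swap_comm u v, Equiv.swap_comm v w]
    exact Equiv.swap_mul_swap_mul_swap hvw.symm huw.symm
  have h_tst : Equiv.swap v w * Equiv.swap u v * Equiv.swap v w = Equiv.swap u w := by
    rw [Equiv.swap_mul_swap_mul_swap huv huw, Equiv.swap_comm]
  simp only [rename_rename, ← Equiv.Perm.coe_mul, ← mul_assoc, h_sts, h_tst]

theorem divided_difference_braid_of_swap [IsDomain k] {u v w : σ} (huv : u ≠ v)
    (hvw : v ≠ w) (huw : u ≠ w) {Duv Dvw : MvPolynomial σ k → MvPolynomial σ k}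
    (hDuv : ∀ P, (X u - X v) * Duv P = P - rename (Equiv.swap u v) P)
    (hDvw : ∀ P, (X v - X w) * Dvw P = P - rename (Equiv.swap v w) P) (P : MvPolynomial σ k) :
    Duv (Dvw (Duv P)) = Dvw (Duv (Dvw P)) := by
  have hX_sub_ne {x y : σ} (hxy : x ≠ y) : (X x - X y : MvPolynomial σ k) ≠ 0 :=
    sub_ne_zero.2 ((X_injective (R := k)).ne hxy)
  refine divided_difference_braid (rename (Equiv.swap u v)).toRingHom
    (rename (Equiv.swap v w)).toRingHom (rename_swap_involutive u v)
    (rename_swap_involutive v w) (rename_swap_braid huv hvw huw) (hX_sub_ne huv)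
    (hX_sub_ne hvw) ?_ ?_ ?_ ?_ ?_ hDuv hDvw P
  · simpa using hX_sub_ne huw
  · simp
  · simp
  · simp [Equiv.swap_apply_of_ne_of_ne, hvw.symm, huw.symm]
  · simp [Equiv.swap_apply_of_ne_of_ne, huv, huw]

end SwapVariables

theorem stmt7_general {k : Type*} [Field k] {n : ℕ} (i j : Fin n)
    (hadj : (j : ℕ) = (i : ℕ) + 1)
    (Di Dj : MvPolynomial (Fin (n + 1)) k → MvPolynomial (Fin (n + 1)) k)
    (hDi : ∀ P, sroot k i * Di P = P - sAct i P)
    (hDj : ∀ P, sroot k j * Dj P = P - sAct j P) :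
    ∀ P, Di (Dj (Di P)) = Dj (Di (Dj P)) := by
  have hji : j.castSucc = i.succ := Fin.ext (by simp [hadj])
  simp only [sroot, sAct, hji] at hDi hDj
  refine divided_difference_braid_of_swap ?_ ?_ ?_ hDi hDj
  all_goals simp only [ne_eq, Fin.ext_iff, Fin.val_castSucc, Fin.val_succ, hadj]; omega

/-- For adjacent indices `i` and `j = i + 1`, the Demazure operators satisfy the
braid relation `∂_i ∂_j ∂_i = ∂_j ∂_i ∂_j`. -/
theorem stmt7 {k : Type*} [Field k] (hchar : (2 : k) ≠ 0) {n : ℕ} (i j : Fin n)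
    (hadj : (j : ℕ) = (i : ℕ) + 1)
    (Di Dj : MvPolynomial (Fin (n + 1)) k → MvPolynomial (Fin (n + 1)) k)
    (hDi : ∀ P, sroot k i * Di P = P - sAct i P)
    (hDj : ∀ P, sroot k j * Dj P = P - sAct j P) :
    ∀ P, Di (Dj (Di P)) = Dj (Di (Dj P)) :=
  stmt7_general i j hadj Di Dj hDi hDj
end
end

section
/- If s_{i_1}···s_{i_d} and s_{j_1}···s_{j_d} are two reduced expressions of the same element w ∈ S_{n+1}, then the composite Demazure operators agree: ∂_{i_1}∘···∘∂_{i_d} = ∂_{j_1}∘···∘∂_{j_d}. Hence ∂_w is well-defined. -/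
open MvPolynomial

noncomputable section

/-- The `i`-th simple reflection (adjacent transposition) of `S_{n+1}`. -/
def sgen {n : ℕ} (i : Fin n) : Equiv.Perm (Fin (n + 1)) :=
  Equiv.swap i.castSucc i.succ

/-!
Both sides are the images of the two words under the monoid map sending the letter `i` to
`∂_i`. So it suffices that (a) the `∂_i` satisfy the Coxeter relations of `S_{n+1}`, and
(b) any two reduced words for `w` have the same image in every monoid where these relations
hold (Matsumoto's theorem for `S_{n+1}`).

(a) Multiplying by the nonzero roots turns `∂_i ∂_j P` (for `|i - j| ≥ 2`) and `∂_i ∂_j ∂_i P`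
(for `j = i + 1`) into alternating sums of the `v P` over `v` in the subgroup generated by
`s_i` and `s_j`; by the corresponding relations between `s_i` and `s_j` these sums are symmetric
in `i` and `j`.

(b) Induction on the number of inversions of `w`, which is the length of its reduced words.
If two reduced words begin with letters `i ≠ j`, both are left descents of `w`, so `w` also has
reduced words `i j u`, `j i u` (for `|i - j| ≥ 2`) or `i j i u`, `j i j u` (for `|i - j| = 1`);
each given word agrees with one of these after its first letter, by induction.
-/

open Equiv Finset

section AdjacentTranspositions

variable {n : ℕ}

@[simp] lemma sgen_mul_self (i : Fin n) : sgen i * sgen i = 1 := swap_mul_self _ _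

@[simp] lemma sgen_inv (i : Fin n) : (sgen i)⁻¹ = sgen i := swap_inv _ _

@[simp] lemma sgen_apply_castSucc (i : Fin n) : sgen i i.castSucc = i.succ := swap_apply_left _ _

@[simp] lemma sgen_apply_succ (i : Fin n) : sgen i i.succ = i.castSucc := swap_apply_right _ _

lemma sgen_apply_of_succ_lt {i : Fin n} {x : Fin (n + 1)} (h : i.succ < x) : sgen i x = x :=
  swap_apply_of_ne_of_ne (Fin.castSucc_lt_succ.trans h).ne' h.ne'

lemma sgen_apply_of_lt_castSucc {i : Fin n} {x : Fin (n + 1)} (h : x < i.castSucc) :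
    sgen i x = x :=
  swap_apply_of_ne_of_ne h.ne (h.trans Fin.castSucc_lt_succ).ne

lemma val_sgen_apply (i : Fin n) (x : Fin (n + 1)) :
    (sgen i x : ℕ) =
      if x = i.castSucc then (i : ℕ) + 1 else if x = i.succ then (i : ℕ) else x := by
  unfold sgen; rw [swap_apply_def]; split_ifs <;> simp

lemma sgen_lt_sgen_iff {i : Fin n} {u v : Fin (n + 1)}
    (h : ¬(u = i.castSucc ∧ v = i.succ)) (h' : ¬(u = i.succ ∧ v = i.castSucc)) :
    sgen i u < sgen i v ↔ u < v := by
  rw [Fin.lt_def, Fin.lt_def, val_sgen_apply, val_sgen_apply]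
  simp only [Fin.ext_iff, Fin.val_succ, Fin.val_castSucc] at *
  split_ifs <;> omega

lemma sgen_mul_sgen_comm {i j : Fin n} (h : i.succ < j.castSucc) :
    sgen i * sgen j = sgen j * sgen i :=
  (Perm.disjoint_swap_swap (by simp [Fin.ext_iff, Fin.lt_def] at *; omega)).commute

lemma sgen_braid {i j : Fin n} (h : i.succ = j.castSucc) :
    sgen i * sgen j * sgen i = sgen j * sgen i * sgen j := by
  have h₁ : j.succ ≠ i.castSucc := by simp [Fin.ext_iff] at *; omega
  have h₂ : j.succ ≠ i.succ := by simp [Fin.ext_iff] at *; omega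
  unfold sgen
  rw [← h, swap_mul_swap_mul_swap Fin.castSucc_lt_succ.ne h₁.symm, swap_comm i.castSucc,
    swap_comm i.succ j.succ, swap_mul_swap_mul_swap h₂ h₁, swap_comm]

end AdjacentTranspositions

section Inversions

variable {n : ℕ}

def inversions (w : Perm (Fin (n + 1))) : Finset (Fin (n + 1) × Fin (n + 1)) :=
  {p | p.1 < p.2 ∧ w p.2 < w p.1}

@[simp] lemma mem_inversions {w : Perm (Fin (n + 1))} {a b : Fin (n + 1)} :
    (a, b) ∈ inversions w ↔ a < b ∧ w b < w a := by
  simp [inversions]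

def IsLeftDescent (w : Perm (Fin (n + 1))) (i : Fin n) : Prop :=
  w⁻¹ i.succ < w⁻¹ i.castSucc

@[simp] lemma inversions_one : inversions (1 : Perm (Fin (n + 1))) = ∅ := by
  ext ⟨a, b⟩
  simpa using le_of_lt

lemma inversions_sgen_mul_of_lt {i : Fin n} {w : Perm (Fin (n + 1))}
    (h : w⁻¹ i.castSucc < w⁻¹ i.succ) :
    inversions (sgen i * w) = insert (w⁻¹ i.castSucc, w⁻¹ i.succ) (inversions w) := by
  ext ⟨a, b⟩
  simp only [mem_insert, mem_inversions, Perm.mul_apply, Prod.mk.injEq, Perm.eq_inv_iff_eq]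
  by_cases h₁ : w a = i.castSucc ∧ w b = i.succ
  · obtain ⟨ha, hb⟩ := h₁
    rw [← Perm.eq_inv_iff_eq.mpr ha, ← Perm.eq_inv_iff_eq.mpr hb] at h
    simp [ha, hb, h]
  by_cases h₂ : w a = i.succ ∧ w b = i.castSucc
  · obtain ⟨ha, hb⟩ := h₂
    rw [← Perm.eq_inv_iff_eq.mpr ha, ← Perm.eq_inv_iff_eq.mpr hb] at h
    simp [ha, hb, h.not_gt, Fin.castSucc_lt_succ.ne']
  rw [sgen_lt_sgen_iff (by tauto) (by tauto)]
  tauto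

lemma card_inversions_sgen_mul_of_lt {i : Fin n} {w : Perm (Fin (n + 1))}
    (h : w⁻¹ i.castSucc < w⁻¹ i.succ) : #(inversions (sgen i * w)) = #(inversions w) + 1 := by
  rw [inversions_sgen_mul_of_lt h, card_insert_of_notMem]
  simp [Fin.castSucc_lt_succ.not_gt]

lemma sgen_mul_inv_apply (i : Fin n) (w : Perm (Fin (n + 1))) (x : Fin (n + 1)) :
    (sgen i * w)⁻¹ x = w⁻¹ (sgen i x) := by
  rw [mul_inv_rev, sgen_inv, Perm.mul_apply]

lemma not_isLeftDescent_iff {w : Perm (Fin (n + 1))} {i : Fin n} :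
    ¬IsLeftDescent w i ↔ w⁻¹ i.castSucc < w⁻¹ i.succ :=
  not_lt.trans (w⁻¹.injective.ne Fin.castSucc_lt_succ.ne).le_iff_lt

lemma IsLeftDescent.card_inversions_sgen_mul {i : Fin n} {w : Perm (Fin (n + 1))}
    (h : IsLeftDescent w i) : #(inversions (sgen i * w)) + 1 = #(inversions w) := by
  have h' : (sgen i * w)⁻¹ i.castSucc < (sgen i * w)⁻¹ i.succ := by
    rw [sgen_mul_inv_apply, sgen_mul_inv_apply, sgen_apply_castSucc, sgen_apply_succ]
    exact h
  simpa [← mul_assoc] using (card_inversions_sgen_mul_of_lt h').symm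

lemma card_inversions_sgen_mul_le (i : Fin n) (w : Perm (Fin (n + 1))) :
    #(inversions (sgen i * w)) ≤ #(inversions w) + 1 := by
  by_cases h : IsLeftDescent w i
  · have := h.card_inversions_sgen_mul; omega
  · exact (card_inversions_sgen_mul_of_lt (not_isLeftDescent_iff.1 h)).le

lemma card_inversions_prod_le_length (l : List (Fin n)) :
    #(inversions (l.map sgen).prod) ≤ l.length := by
  induction l with
  | nil => simp
  | cons i l ih =>
    have := card_inversions_sgen_mul_le i (l.map sgen).prod
    simp only [List.map_cons, List.prod_cons, List.length_cons]
    omega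

lemma exists_isLeftDescent {w : Perm (Fin (n + 1))} (hw : w ≠ 1) : ∃ i, IsLeftDescent w i := by
  by_contra! hno
  have hmono : StrictMono ⇑w⁻¹ := Fin.strictMono_iff_lt_succ.2 fun i =>
    not_isLeftDescent_iff.1 (hno i)
  exact hw (inv_eq_one.1 (Perm.ext fun x => hmono.apply_eq))

/-- The inversion count is the minimal length of a word for `w`, by
`card_inversions_prod_le_length` and `exists_isReducedWord`. -/
def IsReducedWord (w : Perm (Fin (n + 1))) (l : List (Fin n)) : Prop :=
  (l.map sgen).prod = w ∧ l.length = #(inversions w)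

lemma isReducedWord_cons_iff {w : Perm (Fin (n + 1))} {i : Fin n} {l : List (Fin n)} :
    IsReducedWord w (i :: l) ↔ IsLeftDescent w i ∧ IsReducedWord (sgen i * w) l := by
  have hprod : ((i :: l).map sgen).prod = w ↔ (l.map sgen).prod = sgen i * w := by
    rw [List.map_cons, List.prod_cons, eq_inv_mul_iff_mul_eq.symm, sgen_inv]
  rw [IsReducedWord, IsReducedWord, hprod, List.length_cons]
  constructor
  · rintro ⟨hp, hlen⟩
    have hle := hp ▸ card_inversions_prod_le_length l
    have hi : IsLeftDescent w i := by
      by_contra hi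
      have := card_inversions_sgen_mul_of_lt (not_isLeftDescent_iff.1 hi)
      omega
    have := hi.card_inversions_sgen_mul
    exact ⟨hi, hp, by omega⟩
  · rintro ⟨hi, hp, hlen⟩
    have := hi.card_inversions_sgen_mul
    exact ⟨hp, by omega⟩

lemma exists_isReducedWord (w : Perm (Fin (n + 1))) : ∃ l, IsReducedWord w l := by
  by_cases hw : w = 1
  · exact ⟨[], by simp [hw, IsReducedWord]⟩
  obtain ⟨i, hi⟩ := exists_isLeftDescent hw
  have := hi.card_inversions_sgen_mul
  obtain ⟨l, hl⟩ := exists_isReducedWord (sgen i * w)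
  exact ⟨i :: l, isReducedWord_cons_iff.2 ⟨hi, hl⟩⟩
termination_by #(inversions w)
decreasing_by omega

lemma isReducedWord_of_forall_length_le {w : Perm (Fin (n + 1))} {l : List (Fin n)}
    (hl : (l.map sgen).prod = w)
    (hmin : ∀ m : List (Fin n), (m.map sgen).prod = w → l.length ≤ m.length) :
    IsReducedWord w l := by
  obtain ⟨m, hm, hlen⟩ := exists_isReducedWord w
  exact ⟨hl, (hlen ▸ hmin m hm).antisymm (hl ▸ card_inversions_prod_le_length l)⟩

lemma exists_isReducedWord_comm {w : Perm (Fin (n + 1))} {i j : Fin n}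
    (h : i.succ < j.castSucc) (hi : IsLeftDescent w i) (hj : IsLeftDescent w j) :
    ∃ u, IsReducedWord w (i :: j :: u) ∧ IsReducedWord w (j :: i :: u) := by
  have hj' : IsLeftDescent (sgen i * w) j := by
    rwa [IsLeftDescent, sgen_mul_inv_apply, sgen_mul_inv_apply, sgen_apply_of_succ_lt h,
      sgen_apply_of_succ_lt (h.trans Fin.castSucc_lt_succ)]
  obtain ⟨u, hu⟩ := exists_isReducedWord (sgen j * (sgen i * w))
  have hiju := isReducedWord_cons_iff.2 ⟨hi, isReducedWord_cons_iff.2 ⟨hj', hu⟩⟩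
  refine ⟨u, hiju, ?_, hiju.2⟩
  rw [← hiju.1]
  simp only [List.map_cons, List.prod_cons, ← mul_assoc, sgen_mul_sgen_comm h]

lemma exists_isReducedWord_braid {w : Perm (Fin (n + 1))} {i j : Fin n}
    (h : i.succ = j.castSucc) (hi : IsLeftDescent w i) (hj : IsLeftDescent w j) :
    ∃ u, IsReducedWord w (i :: j :: i :: u) ∧ IsReducedWord w (j :: i :: j :: u) := by
  have hij : i.succ < j.succ := h ▸ Fin.castSucc_lt_succ
  have hj' : IsLeftDescent (sgen i * w) j := by
    rw [IsLeftDescent, sgen_mul_inv_apply, sgen_mul_inv_apply, ← h, sgen_apply_succ,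
      sgen_apply_of_succ_lt hij]
    exact hj.trans (h ▸ hi)
  have hi' : IsLeftDescent (sgen j * (sgen i * w)) i := by
    rw [IsLeftDescent, sgen_mul_inv_apply, sgen_mul_inv_apply, sgen_mul_inv_apply,
      sgen_mul_inv_apply, h, sgen_apply_castSucc, sgen_apply_of_succ_lt hij,
      sgen_apply_of_lt_castSucc (Fin.castSucc_lt_succ.trans_eq h), sgen_apply_castSucc, h]
    exact hj
  obtain ⟨u, hu⟩ := exists_isReducedWord (sgen i * (sgen j * (sgen i * w)))
  have hijiu := isReducedWord_cons_iff.2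
    ⟨hi, isReducedWord_cons_iff.2 ⟨hj', isReducedWord_cons_iff.2 ⟨hi', hu⟩⟩⟩
  refine ⟨u, hijiu, ?_, hijiu.2⟩
  rw [← hijiu.1]
  simp only [List.map_cons, List.prod_cons, ← mul_assoc, sgen_braid h]

theorem IsReducedWord.prod_map_eq {M : Type*} [Monoid M] (f : Fin n → M)
    (hcomm : ∀ i j : Fin n, i.succ < j.castSucc → f i * f j = f j * f i)
    (hbraid : ∀ i j : Fin n, i.succ = j.castSucc → f i * f j * f i = f j * f i * f j)
    {w : Perm (Fin (n + 1))} {l l' : List (Fin n)} (hl : IsReducedWord w l)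
    (hl' : IsReducedWord w l') : (l.map f).prod = (l'.map f).prod := by
  induction hN : #(inversions w) generalizing w l l' with
  | zero =>
    rw [List.eq_nil_of_length_eq_zero (hl.2.trans hN),
      List.eq_nil_of_length_eq_zero (hl'.2.trans hN)]
  | succ N ih =>
    have same_head : ∀ {a s s'}, IsReducedWord w (a :: s) → IsReducedWord w (a :: s') →
        ((a :: s).map f).prod = ((a :: s').map f).prod := by
      intro a s s' hs hs'
      rw [isReducedWord_cons_iff] at hs hs'
      have := hs.1.card_inversions_sgen_mul
      simp only [List.map_cons, List.prod_cons, ih hs.2 hs'.2 (by omega)]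
    obtain ⟨i, t, rfl⟩ := List.exists_cons_of_length_eq_add_one (hl.2.trans hN)
    obtain ⟨j, t', rfl⟩ := List.exists_cons_of_length_eq_add_one (hl'.2.trans hN)
    have hi := (isReducedWord_cons_iff.1 hl).1
    have hj := (isReducedWord_cons_iff.1 hl').1
    wlog hij : i ≤ j generalizing i j t t'
    · exact (this j t' hl' i t hl hj hi (le_of_not_ge hij)).symm
    rcases hij.lt_or_eq with hij | rfl
    · rcases (Fin.succ_le_castSucc_iff.2 hij).lt_or_eq with h | h
      · obtain ⟨u, hu, hu'⟩ := exists_isReducedWord_comm h hi hj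
        rw [same_head hl hu, same_head hl' hu']
        simp only [List.map_cons, List.prod_cons, ← mul_assoc, hcomm i j h]
      · obtain ⟨u, hu, hu'⟩ := exists_isReducedWord_braid h hi hj
        rw [same_head hl hu, same_head hl' hu']
        simp only [List.map_cons, List.prod_cons, ← mul_assoc, hbraid i j h]
    · exact same_head hl hl'

end Inversions

section SimpleReflectionAction

variable {k : Type*} [CommRing k] {n : ℕ}

lemma sAct_eq_rename (i : Fin n) (P : MvPolynomial (Fin (n + 1)) k) :
    sAct i P = rename (sgen i) P :=
  rfl

@[simp] lemma sAct_sAct_self (i : Fin n) (P : MvPolynomial (Fin (n + 1)) k) :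
    sAct i (sAct i P) = P := by
  rw [sAct_eq_rename, sAct_eq_rename, rename_rename, ← Perm.coe_mul, sgen_mul_self,
    Perm.coe_one, rename_id_apply]

lemma sAct_sAct_comm {i j : Fin n} (h : i.succ < j.castSucc) (P : MvPolynomial (Fin (n + 1)) k) :
    sAct i (sAct j P) = sAct j (sAct i P) := by
  simp only [sAct_eq_rename, rename_rename, ← Perm.coe_mul, sgen_mul_sgen_comm h]

lemma sAct_braid {i j : Fin n} (h : i.succ = j.castSucc) (P : MvPolynomial (Fin (n + 1)) k) :
    sAct i (sAct j (sAct i P)) = sAct j (sAct i (sAct j P)) := by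
  simp only [sAct_eq_rename, rename_rename, ← Perm.coe_mul, ← mul_assoc, sgen_braid h]

lemma sAct_X (i : Fin n) (a : Fin (n + 1)) : sAct (k := k) i (X a) = X (sgen i a) :=
  rename_X _ _

@[simp] lemma sAct_sroot_self (i : Fin n) : sAct i (sroot k i) = -sroot k i := by
  simp [sroot, sAct_X]

lemma sAct_sroot_of_succ_lt {i j : Fin n} (h : i.succ < j.castSucc) :
    sAct i (sroot k j) = sroot k j ∧ sAct j (sroot k i) = sroot k i := by
  simp [sroot, sAct_X, sgen_apply_of_succ_lt h,
    sgen_apply_of_succ_lt (h.trans Fin.castSucc_lt_succ), sgen_apply_of_lt_castSucc h,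
    sgen_apply_of_lt_castSucc (Fin.castSucc_lt_succ.trans h)]

lemma sAct_sroot_of_succ_eq {i j : Fin n} (h : i.succ = j.castSucc) :
    sAct i (sroot k j) = sroot k i + sroot k j ∧ sAct j (sroot k i) = sroot k j + sroot k i := by
  have hij : i.succ < j.succ := h ▸ Fin.castSucc_lt_succ
  have hj : sgen j i.succ = j.succ := h ▸ sgen_apply_castSucc j
  simp only [sroot, map_sub, sAct_X, ← h, sgen_apply_succ, sgen_apply_of_succ_lt hij, hj,
    sgen_apply_of_lt_castSucc (Fin.castSucc_lt_succ.trans_eq h)]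
  constructor <;> ring

lemma sroot_ne_zero [Nontrivial k] (i : Fin n) : sroot k i ≠ 0 :=
  sub_ne_zero.2 (X_injective.ne Fin.castSucc_lt_succ.ne)

lemma sroot_add_sroot_ne_zero [Nontrivial k] {i j : Fin n} (h : i.succ = j.castSucc) :
    sroot k i + sroot k j ≠ 0 := by
  rw [sroot, sroot, ← h, sub_add_sub_cancel]
  exact sub_ne_zero.2 (X_injective.ne (Fin.castSucc_lt_succ.trans (h ▸ Fin.castSucc_lt_succ)).ne)

end SimpleReflectionAction

section DemazureOperators

variable {k : Type*} [CommRing k] {n : ℕ}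
  {D : Fin n → MvPolynomial (Fin (n + 1)) k → MvPolynomial (Fin (n + 1)) k}

lemma sAct_demazure_self [IsDomain k] (hD : ∀ i P, sroot k i * D i P = P - sAct i P)
    (i : Fin n) (P : MvPolynomial (Fin (n + 1)) k) : sAct i (D i P) = D i P := by
  have h := congrArg (sAct i) (hD i P)
  simp only [map_mul, map_sub, sAct_sAct_self, sAct_sroot_self] at h
  exact mul_left_cancel₀ (sroot_ne_zero i) (by linear_combination -hD i P - h)

lemma mul_demazure_demazure (hD : ∀ i P, sroot k i * D i P = P - sAct i P) {i j : Fin n}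
    (hij : sAct i (sroot k j) = sroot k j) (P : MvPolynomial (Fin (n + 1)) k) :
    sroot k i * sroot k j * D i (D j P) = P - sAct j P - sAct i P + sAct i (sAct j P) := by
  have h := congrArg (sAct i) (hD j P)
  simp only [map_mul, map_sub, hij] at h
  linear_combination sroot k j * hD i (D j P) + hD j P - h

/-- The hypotheses are symmetric under `i ↔ j`, so this also expands `∂_j ∂_i ∂_j P`. -/
lemma mul_demazure_demazure_demazure [IsDomain k]
    (hD : ∀ i P, sroot k i * D i P = P - sAct i P) {i j : Fin n}
    (hij : sAct i (sroot k j) = sroot k i + sroot k j)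
    (hji : sAct j (sroot k i) = sroot k j + sroot k i) (P : MvPolynomial (Fin (n + 1)) k) :
    sroot k i * sroot k j * (sroot k i + sroot k j) * D i (D j (D i P)) =
      P - sAct i P - sAct j P + sAct j (sAct i P) + sAct i (sAct j P)
        - sAct i (sAct j (sAct i P)) := by
  have hr := congrArg (sAct i) (hD j (D i P))
  have hq := congrArg (sAct j) (hD i P)
  have hqq := congrArg (sAct i) hq
  simp only [map_mul, map_sub, map_add, hij, hji, sAct_sroot_self, sAct_demazure_self hD]
    at hr hq hqq
  linear_combination sroot k j * (sroot k i + sroot k j) * hD i (D j (D i P)) +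
    (sroot k i + sroot k j) * hD j (D i P) - sroot k j * hr + hD i P - hq + hqq

lemma demazure_comm [IsDomain k] (hD : ∀ i P, sroot k i * D i P = P - sAct i P) {i j : Fin n}
    (h : i.succ < j.castSucc) (P : MvPolynomial (Fin (n + 1)) k) :
    D i (D j P) = D j (D i P) := by
  obtain ⟨hij, hji⟩ := sAct_sroot_of_succ_lt (k := k) h
  refine mul_left_cancel₀ (mul_ne_zero (sroot_ne_zero i) (sroot_ne_zero j)) ?_
  linear_combination mul_demazure_demazure hD hij P - mul_demazure_demazure hD hji P +
    sAct_sAct_comm h P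

lemma demazure_braid [IsDomain k] (hD : ∀ i P, sroot k i * D i P = P - sAct i P) {i j : Fin n}
    (h : i.succ = j.castSucc) (P : MvPolynomial (Fin (n + 1)) k) :
    D i (D j (D i P)) = D j (D i (D j P)) := by
  obtain ⟨hij, hji⟩ := sAct_sroot_of_succ_eq (k := k) h
  refine mul_left_cancel₀ (mul_ne_zero (mul_ne_zero (sroot_ne_zero i) (sroot_ne_zero j))
    (sroot_add_sroot_ne_zero h)) ?_
  linear_combination mul_demazure_demazure_demazure hD hij hji P -
    mul_demazure_demazure_demazure hD hji hij P - sAct_braid h P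

end DemazureOperators

theorem stmt8_general {k : Type*} [Field k] {n : ℕ}
    (D : Fin n → MvPolynomial (Fin (n + 1)) k → MvPolynomial (Fin (n + 1)) k)
    (hD : ∀ (i : Fin n) P, sroot k i * D i P = P - sAct i P)
    (w : Equiv.Perm (Fin (n + 1))) (l l' : List (Fin n))
    (hl : (l.map sgen).prod = w) (hl' : (l'.map sgen).prod = w)
    (hred : ∀ m : List (Fin n), (m.map sgen).prod = w → l.length ≤ m.length)
    (hred' : ∀ m : List (Fin n), (m.map sgen).prod = w → l'.length ≤ m.length) :
    (l.map D).foldr (· ∘ ·) id = (l'.map D).foldr (· ∘ ·) id :=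
  -- in `Function.End`, `List.prod` unfolds to `List.foldr (· ∘ ·) id`
  (isReducedWord_of_forall_length_le hl hred).prod_map_eq (M := Function.End _) D
    (fun _ _ h => funext (demazure_comm hD h)) (fun _ _ h => funext (demazure_braid hD h))
    (isReducedWord_of_forall_length_le hl' hred')

/-- If `s_{i₁} ⋯ s_{i_d}` and `s_{j₁} ⋯ s_{j_d}` are two reduced expressions for the
same `w ∈ S_{n+1}`, then the corresponding composites of Demazure operators agree;
hence `∂_w` is well-defined. -/
theorem stmt8 {k : Type*} [Field k] (hchar : (2 : k) ≠ 0) {n : ℕ}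
    (D : Fin n → MvPolynomial (Fin (n + 1)) k → MvPolynomial (Fin (n + 1)) k)
    (hD : ∀ (i : Fin n) P, sroot k i * D i P = P - sAct i P)
    (w : Equiv.Perm (Fin (n + 1))) (l l' : List (Fin n))
    (hl : (l.map sgen).prod = w) (hl' : (l'.map sgen).prod = w)
    (hred : ∀ m : List (Fin n), (m.map sgen).prod = w → l.length ≤ m.length)
    (hred' : ∀ m : List (Fin n), (m.map sgen).prod = w → l'.length ≤ m.length) :
    (l.map D).foldr (· ∘ ·) id = (l'.map D).foldr (· ∘ ·) id :=
  stmt8_general D hD w l l' hl hl' hred hred'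
end
end
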